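/- arXiv:0812.4206 — 3 statements merged into one kernel-verified Lean document; each statement's English description precedes it below -/
import Mathlib

section
/- Let f be a δ-Partitionable fractional perfect matching of G, and let f' be a fractional perfect matching of G equivalent to f with E(f') ⊆ E(f). Then f' is δ-Partitionable. -/
open Finset
open scoped Classical

variable {V : Type*} [Fintype V] [DecidableEq V]

/-- The sum of `f` over the edges (elements of `Sym2 V`) containing the vertex `v`. -/
noncomputable def fracDeg (f : Sym2 V → ℝ) (v : V) : ℝ :=
  ∑ e ∈ Finset.univ.filter (fun e : Sym2 V => v ∈ e), f e

/-- `f` is a fractional matching of `G`. -/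
def IsFracMatching (G : SimpleGraph V) (f : Sym2 V → ℝ) : Prop :=
  (∀ e, 0 ≤ f e ∧ f e ≤ 1) ∧ (∀ e, e ∉ G.edgeSet → f e = 0) ∧ ∀ v, fracDeg f v ≤ 1

/-- `f` is a fractional perfect matching of `G`. -/
def IsFPM (G : SimpleGraph V) (f : Sym2 V → ℝ) : Prop :=
  (∀ e, 0 ≤ f e ∧ f e ≤ 1) ∧ (∀ e, e ∉ G.edgeSet → f e = 0) ∧ ∀ v, fracDeg f v = 1

/-- `E(f)`: the set of edges with positive weight. -/
noncomputable def fSupp (f : Sym2 V → ℝ) : Finset (Sym2 V) :=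
  Finset.univ.filter (fun e => 0 < f e)

/-- Number of edges of `F` containing `v` (the degree of `v` in the subgraph with edge set `F`). -/
noncomputable def edgeDeg (F : Finset (Sym2 V)) (v : V) : ℕ :=
  (F.filter (fun e => v ∈ e)).card

/-- The set of vertices incident to some edge of `F`. -/
noncomputable def vertSet (F : Finset (Sym2 V)) : Finset V :=
  Finset.univ.filter (fun v => ∃ e ∈ F, v ∈ e)

/-- Two edge-weight functions are equivalent: same incident sums at every vertex. -/
def Equiv' (f f' : Sym2 V → ℝ) : Prop := ∀ v : V, fracDeg f v = fracDeg f' v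

/-- `F` consists of a single edge. -/
def IsSingleEdge (F : Finset (Sym2 V)) : Prop := ∃ e : Sym2 V, F = {e}

/-- `F` is the edge set of an odd cycle. -/
def IsOddCycleSet (F : Finset (Sym2 V)) : Prop :=
  ∃ (v : V) (c : (SimpleGraph.fromEdgeSet (↑F : Set (Sym2 V))).Walk v v),
    c.IsCycle ∧ Odd c.length ∧ c.edges.toFinset = F

/-- Two edge sets are vertex-disjoint. -/
def VDisj (F F' : Finset (Sym2 V)) : Prop :=
  ∀ v : V, (∃ e ∈ F, v ∈ e) → ¬ ∃ e ∈ F', v ∈ e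

/-- Every connected component of the subgraph with edge set `F` (ignoring isolated
vertices) is either a single edge or an odd cycle, expressed via a partition of `F`
into pairwise vertex-disjoint such pieces. -/
def EdgesAndOddCycles (F : Finset (Sym2 V)) : Prop :=
  ∃ P : Finset (Finset (Sym2 V)),
    (∀ A ∈ P, IsSingleEdge A ∨ IsOddCycleSet A) ∧
    (∀ A ∈ P, ∀ B ∈ P, A ≠ B → VDisj A B) ∧
    P.biUnion id = F

/-- The family `P` witnesses that `f` is a `δ`-Partitionable fractional perfect matching. -/
def IsPartitionWitness (f : Sym2 V → ℝ) (δ : ℕ) (P : Fin δ → Finset (Sym2 V)) : Prop :=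
  (∀ j, (P j).Nonempty) ∧
  (∀ j k, j ≠ k → VDisj (P j) (P k)) ∧
  (∀ j, P j ⊆ fSupp f) ∧
  (∀ e ∈ fSupp f, ∃ j, e ∈ P j) ∧
  ∀ j, ∑ e ∈ P j, f e = (Fintype.card V : ℝ) / (2 * δ)

/-- `f` is `δ`-Partitionable. -/
def IsDeltaPartitionable (f : Sym2 V → ℝ) (δ : ℕ) : Prop :=
  ∃ P : Fin δ → Finset (Sym2 V), IsPartitionWitness f δ P

/-! Since the parts `P j` are vertex-disjoint and cover `E(f) ⊇ E(f')`, every edge of `E(f')`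
meeting a vertex of `P j` lies in `P j`. Double counting then gives
`2 * ∑ e ∈ P j, f' e = ∑ v ∈ V(P j), fracDeg f' v`, and by equivalence the right side is the same
for `f`, so `f'` has total weight `|V| / (2δ)` on each `P j`. The parts `P j ∩ E(f')` therefore
witness that `f'` is `δ`-Partitionable. -/

lemma sum_fracDeg_eq_sum_card_mul (S : Finset V) (g : Sym2 V → ℝ) :
    ∑ v ∈ S, fracDeg g v = ∑ e : Sym2 V, ((S.filter (· ∈ e)).card : ℝ) * g e := by
  unfold fracDeg
  simp_rw [Finset.sum_filter]
  rw [Finset.sum_comm]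
  refine Finset.sum_congr rfl fun e _ => ?_
  rw [← Finset.sum_filter, Finset.sum_const, nsmul_eq_mul]

lemma card_filter_mem_sym2 {α : Type*} [DecidableEq α] {S : Finset α} {e : Sym2 α}
    (he : ¬e.IsDiag) (hS : ∀ v ∈ e, v ∈ S) :
    (S.filter (· ∈ e)).card = 2 := by
  have : S.filter (· ∈ e) = e.toFinset := by
    ext v
    simpa using fun hv => hS v hv
  rw [this, Sym2.card_toFinset_of_not_isDiag e he]

lemma mem_vertSet {F : Finset (Sym2 V)} {e : Sym2 V} {v : V} (he : e ∈ F) (hv : v ∈ e) :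
    v ∈ vertSet F := by
  simpa [vertSet] using ⟨e, he, hv⟩

lemma sum_fracDeg_vertSet {F : Finset (Sym2 V)} {g : Sym2 V → ℝ} (hF : ∀ e ∈ F, ¬e.IsDiag)
    (hg : ∀ e ∉ F, ∀ v ∈ e, v ∈ vertSet F → g e = 0) :
    ∑ v ∈ vertSet F, fracDeg g v = 2 * ∑ e ∈ F, g e := by
  rw [sum_fracDeg_eq_sum_card_mul, Finset.mul_sum,
    ← Finset.sum_subset (Finset.subset_univ F)]
  · refine Finset.sum_congr rfl fun e he => ?_
    rw [card_filter_mem_sym2 (hF e he) fun v hv => mem_vertSet he hv]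
    norm_num
  · intro e _ he
    by_cases hmeet : ∃ v ∈ e, v ∈ vertSet F
    · obtain ⟨v, hv, hvF⟩ := hmeet
      rw [hg e he v hv hvF, mul_zero]
    · rw [Finset.filter_false_of_mem fun v hvF hv => hmeet ⟨v, hv, hvF⟩]
      simp

omit [DecidableEq V] in
lemma eq_zero_of_notMem_fSupp {g : Sym2 V → ℝ} {e : Sym2 V} (hg : 0 ≤ g e) (he : e ∉ fSupp g) :
    g e = 0 :=
  le_antisymm (by simpa [fSupp] using he) hg

lemma IsFPM.not_isDiag_of_mem_fSupp {G : SimpleGraph V} {f : Sym2 V → ℝ} (hf : IsFPM G f)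
    {e : Sym2 V} (he : e ∈ fSupp f) : ¬e.IsDiag := by
  refine G.not_isDiag_of_mem_edgeSet (by_contra fun hG => ?_)
  simp [fSupp, hf.2.1 e hG] at he

namespace IsPartitionWitness

variable {f g : Sym2 V → ℝ} {δ : ℕ} {P : Fin δ → Finset (Sym2 V)}

lemma two_mul_sum_eq (hP : IsPartitionWitness f δ P) (hf : ∀ e ∈ fSupp f, ¬e.IsDiag)
    (hg : ∀ e ∉ fSupp f, g e = 0) (j : Fin δ) :
    ∑ v ∈ vertSet (P j), fracDeg g v = 2 * ∑ e ∈ P j, g e := by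
  obtain ⟨-, hdisj, hsubP, hcov, -⟩ := hP
  refine sum_fracDeg_vertSet (fun e he => hf e (hsubP j he)) fun e he v hv hvP => ?_
  by_contra hne
  obtain ⟨k, hk⟩ := hcov e (by_contra fun h => hne (hg e h))
  have hjk : j ≠ k := by rintro rfl; exact he hk
  exact hdisj j k hjk v (by simpa [vertSet] using hvP) ⟨e, hk, hv⟩

omit [DecidableEq V] in
lemma filter_pos_of_sum_eq (hP : IsPartitionWitness f δ P) (hg : ∀ e, 0 ≤ g e)
    (hsub : fSupp g ⊆ fSupp f) (hsum : ∀ j, ∑ e ∈ P j, g e = ∑ e ∈ P j, f e) :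
    IsPartitionWitness g δ fun j => (P j).filter (0 < g ·) := by
  obtain ⟨hne, hdisj, hsubP, hcov, hsumP⟩ := hP
  have hsum_filter (j : Fin δ) : ∑ e ∈ (P j).filter (0 < g ·), g e = ∑ e ∈ P j, g e :=
    Finset.sum_filter_of_ne fun e _ he => lt_of_le_of_ne (hg e) he.symm
  refine ⟨fun j => ?_, fun j k hjk v hv hv' => ?_, fun j e he => ?_, fun e he => ?_,
    fun j => by rw [hsum_filter, hsum, hsumP]⟩
  · have hpos : 0 < ∑ e ∈ P j, f e :=
      Finset.sum_pos (fun e he => by simpa [fSupp] using hsubP j he) (hne j)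
    rw [← hsum, ← hsum_filter] at hpos
    exact Finset.nonempty_iff_ne_empty.2 fun h => by simp [h] at hpos
  · obtain ⟨e, he, hve⟩ := hv
    obtain ⟨e', he', hve'⟩ := hv'
    exact hdisj j k hjk v ⟨e, Finset.mem_of_mem_filter e he, hve⟩
      ⟨e', Finset.mem_of_mem_filter e' he', hve'⟩
  · simpa [fSupp] using (Finset.mem_filter.1 he).2
  · obtain ⟨j, hj⟩ := hcov e (hsub he)
    exact ⟨j, Finset.mem_filter.2 ⟨hj, by simpa [fSupp] using he⟩⟩

end IsPartitionWitness

theorem equiv_preserves_partitionable_general (G : SimpleGraph V)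
    (δ : ℕ) (f f' : Sym2 V → ℝ)
    (hf : IsFPM G f) (hpart : IsDeltaPartitionable f δ)
    (hf' : IsFPM G f') (hsub : fSupp f' ⊆ fSupp f) (hequiv : Equiv' f f') :
    IsDeltaPartitionable f' δ := by
  obtain ⟨P, hP⟩ := hpart
  have hf'0 (e : Sym2 V) : 0 ≤ f' e := (hf'.1 e).1
  refine ⟨_, hP.filter_pos_of_sum_eq hf'0 hsub fun j => ?_⟩
  have hloop (e : Sym2 V) : e ∈ fSupp f → ¬e.IsDiag := hf.not_isDiag_of_mem_fSupp
  have hsum_f := hP.two_mul_sum_eq hloop (fun e he => eq_zero_of_notMem_fSupp (hf.1 e).1 he) j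
  have hsum_f' := hP.two_mul_sum_eq hloop
    (fun e he => eq_zero_of_notMem_fSupp (hf'0 e) fun he' => he (hsub he')) j
  rw [Finset.sum_congr rfl fun v _ => hequiv v] at hsum_f
  linarith

/-- if `f` is a `δ`-Partitionable fractional perfect matching and `f'` is an
equivalent fractional perfect matching with `E(f') ⊆ E(f)`, then `f'` is
`δ`-Partitionable. -/
theorem equiv_preserves_partitionable (G : SimpleGraph V) (hG : ∀ v : V, ∃ u, G.Adj u v)
    (δ : ℕ) (hδ : 1 ≤ δ) (f f' : Sym2 V → ℝ)
    (hf : IsFPM G f) (hpart : IsDeltaPartitionable f δ)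
    (hf' : IsFPM G f') (hsub : fSupp f' ⊆ fSupp f) (hequiv : Equiv' f f') :
    IsDeltaPartitionable f' δ :=
  equiv_preserves_partitionable_general G δ f f' hf hpart hf' hsub hequiv
end

section
/- In every Nash equilibrium σ of AD_{α,δ}(G), the set Supports_σ(A) (the union of the attackers' supports) is a vertex cover of the subgraph of G induced by the edge set Supports_σ(D), i.e., every edge in Supports_σ(D) has at least one endpoint in Supports_σ(A). -/
open Finset
open scoped Classical

variable {V : Type*} [Fintype V] [DecidableEq V]

/-- A mixed profile of the game `AD_{α,δ}(G)`: each of the `α` attackers has a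
probability distribution on the vertices, and each of the `δ` defenders has a
probability distribution on the edges of `G`. -/
structure MixedProfile (G : SimpleGraph V) (α δ : ℕ) where
  atk : Fin α → V → ℝ
  dfn : Fin δ → Sym2 V → ℝ
  atk_nonneg : ∀ i v, 0 ≤ atk i v
  atk_sum : ∀ i, ∑ v : V, atk i v = 1
  dfn_nonneg : ∀ j e, 0 ≤ dfn j e
  dfn_edge : ∀ j e, e ∉ G.edgeSet → dfn j e = 0
  dfn_sum : ∀ j, ∑ e : Sym2 V, dfn j e = 1

namespace MixedProfile

variable {G : SimpleGraph V} {α δ : ℕ}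

/-- A pure configuration: a vertex for each attacker, an edge for each defender. -/
abbrev Config (V : Type*) (α δ : ℕ) := (Fin α → V) × (Fin δ → Sym2 V)

/-- The probability of a pure configuration under the (independent) mixed profile. -/
noncomputable def configProb (σ : MixedProfile G α δ) (c : Config V α δ) : ℝ :=
  (∏ i, σ.atk i (c.1 i)) * ∏ j, σ.dfn j (c.2 j)

/-- The number of attackers choosing vertex `w` in configuration `c`. -/
noncomputable def atkCount (c : Config V α δ) (w : V) : ℕ :=
  (Finset.univ.filter (fun i : Fin α => c.1 i = w)).card

/-- The number of defenders choosing an edge containing `w` in configuration `c`. -/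
noncomputable def dfnCount (c : Config V α δ) (w : V) : ℕ :=
  (Finset.univ.filter (fun j : Fin δ => w ∈ c.2 j)).card

/-- The utility of defender `d` at a pure configuration: the fair share
`|A_s(u)|/|D_s(u)| + |A_s(v)|/|D_s(v)|` for its chosen edge `(u,v)`. -/
noncomputable def defUtilPure (c : Config V α δ) (d : Fin δ) : ℝ :=
  ∑ w ∈ Finset.univ.filter (fun w : V => w ∈ c.2 d),
    (atkCount c w : ℝ) / (dfnCount c w : ℝ)

/-- The utility of attacker `a` at a pure configuration: `0` if caught, `1` otherwise. -/
noncomputable def atkUtilPure (c : Config V α δ) (a : Fin α) : ℝ :=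
  if ∃ j, c.1 a ∈ c.2 j then 0 else 1

/-- Expected utility of defender `d`. -/
noncomputable def expDefUtil (σ : MixedProfile G α δ) (d : Fin δ) : ℝ :=
  ∑ c : Config V α δ, σ.configProb c * defUtilPure c d

/-- Expected utility of attacker `a`. -/
noncomputable def expAtkUtil (σ : MixedProfile G α δ) (a : Fin α) : ℝ :=
  ∑ c : Config V α δ, σ.configProb c * atkUtilPure c a

/-- `σ` is a Nash equilibrium: no player can strictly increase her expected utility by
unilaterally changing her mixed strategy. -/
def IsNash (σ : MixedProfile G α δ) : Prop :=
  (∀ (τ : MixedProfile G α δ) (a : Fin α),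
      (∀ i, i ≠ a → τ.atk i = σ.atk i) → τ.dfn = σ.dfn →
      τ.expAtkUtil a ≤ σ.expAtkUtil a) ∧
  (∀ (τ : MixedProfile G α δ) (d : Fin δ),
      τ.atk = σ.atk → (∀ j, j ≠ d → τ.dfn j = σ.dfn j) →
      τ.expDefUtil d ≤ σ.expDefUtil d)

/-- The union of the supports of the defenders. -/
noncomputable def dfnSupports (σ : MixedProfile G α δ) : Finset (Sym2 V) :=
  Finset.univ.filter (fun e => ∃ j, 0 < σ.dfn j e)

/-- The union of the supports of the attackers. -/
noncomputable def atkSupports (σ : MixedProfile G α δ) : Finset V :=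
  Finset.univ.filter (fun v => ∃ i, 0 < σ.atk i v)

/-- The probability that some defender chooses an edge containing `v`. -/
noncomputable def hitProb (σ : MixedProfile G α δ) (v : V) : ℝ :=
  1 - ∏ j, (1 - fracDeg (σ.dfn j) v)

/-- The minimum hitting probability of the profile. -/
noncomputable def minHit [Nonempty V] (σ : MixedProfile G α δ) : ℝ :=
  Finset.univ.inf' Finset.univ_nonempty σ.hitProb

/-- The Defense-Ratio of a profile. -/
noncomputable def defenseRatio (σ : MixedProfile G α δ) : ℝ :=
  (α : ℝ) / ∑ d, σ.expDefUtil d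

end MixedProfile

/-- `F` is an edge cover of `G`. -/
def IsEdgeCover (G : SimpleGraph V) (F : Finset (Sym2 V)) : Prop :=
  (↑F ⊆ G.edgeSet) ∧ ∀ v : V, ∃ e ∈ F, v ∈ e

/-- `β'(G)`: the minimum size of an edge cover of `G`. -/
noncomputable def edgeCoverNumber (G : SimpleGraph V) : ℕ :=
  sInf {n : ℕ | ∃ F : Finset (Sym2 V), IsEdgeCover G F ∧ F.card = n}

open MixedProfile

/-!
Suppose defender `d` plays an edge `e` with positive probability although no attacker ever
visits an endpoint of `e`. Then `e` earns `d` nothing. But some attacker visits some vertex `v`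
with positive probability, and `v` lies on an edge `e'` of `G`; playing `e'` catches that
attacker with positive probability and so earns `d` a positive amount. Shifting `d`'s mass from
`e` to `e'` is then a profitable deviation, contradicting equilibrium.
-/

namespace MixedProfile

variable {G : SimpleGraph V} {α δ : ℕ}

lemma exists_atk_pos (σ : MixedProfile G α δ) (i : Fin α) : ∃ v, 0 < σ.atk i v := by
  obtain ⟨v, -, hv⟩ := exists_lt_of_sum_lt (s := univ) (f := fun _ => 0) (g := σ.atk i)
    (by simp [σ.atk_sum i])
  exact ⟨v, hv⟩

lemma exists_dfn_pos (σ : MixedProfile G α δ) (j : Fin δ) : ∃ e, 0 < σ.dfn j e := by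
  obtain ⟨e, -, he⟩ := exists_lt_of_sum_lt (s := univ) (f := fun _ => 0) (g := σ.dfn j)
    (by simp [σ.dfn_sum j])
  exact ⟨e, he⟩

lemma defUtilPure_nonneg (c : Config V α δ) (d : Fin δ) : 0 ≤ defUtilPure c d :=
  sum_nonneg fun _ _ => div_nonneg (Nat.cast_nonneg _) (Nat.cast_nonneg _)

lemma defUtilPure_eq_zero (c : Config V α δ) (d : Fin δ) (h : ∀ i, c.1 i ∉ c.2 d) :
    defUtilPure c d = 0 := by
  refine sum_eq_zero fun w hw => ?_
  have hcount : atkCount c w = 0 :=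
    card_eq_zero.2 <| filter_eq_empty_iff.2 fun i _ hi => h i (hi ▸ (mem_filter.1 hw).2)
  simp [hcount]

lemma defUtilPure_pos (c : Config V α δ) {d : Fin δ} {i : Fin α} (h : c.1 i ∈ c.2 d) :
    0 < defUtilPure c d := by
  refine sum_pos' (fun _ _ => div_nonneg (Nat.cast_nonneg _) (Nat.cast_nonneg _))
    ⟨c.1 i, mem_filter.2 ⟨mem_univ _, h⟩, div_pos ?_ ?_⟩
  · exact Nat.cast_pos.2 <| card_pos.2 ⟨i, mem_filter.2 ⟨mem_univ _, rfl⟩⟩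
  · exact Nat.cast_pos.2 <| card_pos.2 ⟨d, mem_filter.2 ⟨mem_univ _, h⟩⟩

noncomputable def othersProb (σ : MixedProfile G α δ) (d : Fin δ) (c : Config V α δ) : ℝ :=
  (∏ i, σ.atk i (c.1 i)) * ∏ j ∈ univ.erase d, σ.dfn j (c.2 j)

lemma othersProb_nonneg (σ : MixedProfile G α δ) (d : Fin δ) (c : Config V α δ) :
    0 ≤ σ.othersProb d c :=
  mul_nonneg (prod_nonneg fun i _ => σ.atk_nonneg i _) (prod_nonneg fun j _ => σ.dfn_nonneg j _)

lemma othersProb_eq_zero (σ : MixedProfile G α δ) (d : Fin δ) {c : Config V α δ} {i : Fin α}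
    (h : σ.atk i (c.1 i) = 0) : σ.othersProb d c = 0 := by
  rw [othersProb, prod_eq_zero (mem_univ i) h, zero_mul]

lemma configProb_eq_mul_othersProb (σ τ : MixedProfile G α δ) (d : Fin δ)
    (hatk : τ.atk = σ.atk) (hdfn : ∀ j, j ≠ d → τ.dfn j = σ.dfn j) (c : Config V α δ) :
    τ.configProb c = τ.dfn d (c.2 d) * σ.othersProb d c := by
  have hothers : ∏ j ∈ univ.erase d, τ.dfn j (c.2 j) = ∏ j ∈ univ.erase d, σ.dfn j (c.2 j) :=
    prod_congr rfl fun j hj => by rw [hdfn j (ne_of_mem_erase hj)]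
  rw [configProb, othersProb, ← mul_prod_erase univ _ (mem_univ d), hothers, hatk]
  ring

/-- The expected utility of defender `d` for the pure strategy `e` against `σ`. -/
noncomputable def edgeValue (σ : MixedProfile G α δ) (d : Fin δ) (e : Sym2 V) : ℝ :=
  ∑ c ∈ univ.filter (fun c : Config V α δ => c.2 d = e), σ.othersProb d c * defUtilPure c d

lemma expDefUtil_eq_sum_edgeValue (σ τ : MixedProfile G α δ) (d : Fin δ)
    (hatk : τ.atk = σ.atk) (hdfn : ∀ j, j ≠ d → τ.dfn j = σ.dfn j) :
    τ.expDefUtil d = ∑ e, τ.dfn d e * σ.edgeValue d e := by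
  rw [expDefUtil, ← sum_fiberwise univ (fun c : Config V α δ => c.2 d)]
  refine sum_congr rfl fun e _ => ?_
  rw [edgeValue, mul_sum]
  refine sum_congr rfl fun c hc => ?_
  rw [configProb_eq_mul_othersProb σ τ d hatk hdfn, (mem_filter.1 hc).2]
  ring

lemma edgeValue_eq_zero (σ : MixedProfile G α δ) (d : Fin δ) {e : Sym2 V}
    (he : ∀ v ∈ e, ∀ i, σ.atk i v = 0) : σ.edgeValue d e = 0 := by
  refine sum_eq_zero fun c hc => ?_
  rw [(mem_filter.1 hc).2.symm] at he
  by_cases hcaught : ∃ i, c.1 i ∈ c.2 d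
  · obtain ⟨i, hi⟩ := hcaught
    rw [σ.othersProb_eq_zero d (he _ hi i), zero_mul]
  · rw [defUtilPure_eq_zero c d (not_exists.1 hcaught), mul_zero]

lemma edgeValue_pos (σ : MixedProfile G α δ) (d : Fin δ) {e : Sym2 V} {v : V} {i : Fin α}
    (hv : v ∈ e) (hi : 0 < σ.atk i v) : 0 < σ.edgeValue d e := by
  choose a ha using σ.exists_atk_pos
  choose f hf using σ.exists_dfn_pos
  let c : Config V α δ := (Function.update a i v, Function.update f d e)
  have hcd : c.2 d = e := Function.update_self d e f
  have hprob : 0 < σ.othersProb d c := by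
    refine mul_pos (prod_pos fun k _ => ?_) (prod_pos fun j hj => ?_)
    · rcases eq_or_ne k i with rfl | hk
      · simpa [c] using hi
      · simpa [c, hk] using ha k
    · simpa [c, ne_of_mem_erase hj] using hf j
  refine sum_pos' (fun c _ => mul_nonneg (σ.othersProb_nonneg d c) (defUtilPure_nonneg c d))
    ⟨c, mem_filter.2 ⟨mem_univ _, hcd⟩, mul_pos hprob (defUtilPure_pos c (i := i) ?_)⟩
  simpa [c, hcd] using hv

def updateDfn (σ : MixedProfile G α δ) (d : Fin δ) (g : Sym2 V → ℝ) (hg_nonneg : ∀ e, 0 ≤ g e)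
    (hg_edge : ∀ e, e ∉ G.edgeSet → g e = 0) (hg_sum : ∑ e, g e = 1) : MixedProfile G α δ where
  atk := σ.atk
  dfn := Function.update σ.dfn d g
  atk_nonneg := σ.atk_nonneg
  atk_sum := σ.atk_sum
  dfn_nonneg j e := by
    rcases eq_or_ne j d with rfl | hj
    · simpa using hg_nonneg e
    · simpa [hj] using σ.dfn_nonneg j e
  dfn_edge j e he := by
    rcases eq_or_ne j d with rfl | hj
    · simpa using hg_edge e he
    · simpa [hj] using σ.dfn_edge j e he
  dfn_sum j := by
    rcases eq_or_ne j d with rfl | hj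
    · simpa using hg_sum
    · simpa [hj] using σ.dfn_sum j

lemma IsNash.sum_mul_edgeValue_le {σ : MixedProfile G α δ} (hσ : σ.IsNash) (d : Fin δ)
    (g : Sym2 V → ℝ) (hg_nonneg : ∀ e, 0 ≤ g e) (hg_edge : ∀ e, e ∉ G.edgeSet → g e = 0)
    (hg_sum : ∑ e, g e = 1) :
    ∑ e, g e * σ.edgeValue d e ≤ ∑ e, σ.dfn d e * σ.edgeValue d e := by
  let τ := σ.updateDfn d g hg_nonneg hg_edge hg_sum
  have hdfn : ∀ j, j ≠ d → τ.dfn j = σ.dfn j := fun j hj => by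
    simp [τ, updateDfn, hj]
  have hdfn_self : τ.dfn d = g := by simp [τ, updateDfn]
  have hle := hσ.2 τ d rfl hdfn
  rwa [expDefUtil_eq_sum_edgeValue σ τ d rfl hdfn, expDefUtil_eq_sum_edgeValue σ σ d rfl
    fun _ _ => rfl, hdfn_self] at hle

/-- Moving the mass that `σ.dfn d` puts on `e` over to `e'` must not profit defender `d`. -/
lemma IsNash.edgeValue_le_of_dfn_pos {σ : MixedProfile G α δ} (hσ : σ.IsNash) {d : Fin δ}
    {e e' : Sym2 V} (he : 0 < σ.dfn d e) (he' : e' ∈ G.edgeSet) :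
    σ.edgeValue d e' ≤ σ.edgeValue d e := by
  let g : Sym2 V → ℝ := fun x =>
    σ.dfn d x + (if x = e' then σ.dfn d e else 0) - (if x = e then σ.dfn d e else 0)
  have hg_nonneg : ∀ x, 0 ≤ g x := fun x => by
    have := σ.dfn_nonneg d x
    simp only [g]
    split_ifs <;> subst_vars <;> linarith
  have hg_edge : ∀ x, x ∉ G.edgeSet → g x = 0 := fun x hx => by
    have hx' : x ≠ e' := fun h => hx (h ▸ he')
    by_cases hxe : x = e
    · subst hxe; simp [g, hx']
    · simp [g, hx', hxe, σ.dfn_edge d x hx]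
  have hg_sum : ∑ x, g x = 1 := by
    simp [g, sum_add_distrib, sum_sub_distrib, σ.dfn_sum d]
  have hle := hσ.sum_mul_edgeValue_le d g hg_nonneg hg_edge hg_sum
  simp only [g, add_mul, sub_mul, ite_mul, zero_mul, sum_add_distrib, sum_sub_distrib,
    sum_ite_eq', mem_univ, if_true] at hle
  nlinarith

end MixedProfile

theorem nash_attacker_supports_vertex_cover_general (G : SimpleGraph V)
    (hG : ∀ v : V, ∃ u, G.Adj u v) (α δ : ℕ) (hα : 1 ≤ α)
    (σ : MixedProfile G α δ) (hσ : σ.IsNash) :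
    ∀ e ∈ σ.dfnSupports, ∃ v ∈ σ.atkSupports, v ∈ e := by
  intro e he
  by_contra! hcover
  obtain ⟨d, hd⟩ : ∃ d, 0 < σ.dfn d e := (mem_filter.1 he).2
  have hunattacked : ∀ v ∈ e, ∀ i, σ.atk i v = 0 := fun v hv i =>
    (σ.atk_nonneg i v).antisymm' <| not_lt.1 fun h =>
      hcover v (mem_filter.2 ⟨mem_univ _, i, h⟩) hv
  obtain ⟨v, hv⟩ := σ.exists_atk_pos ⟨0, hα⟩
  obtain ⟨u, huv⟩ := hG v
  have hpos := σ.edgeValue_pos d (Sym2.mem_mk_right u v) hv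
  have hle := hσ.edgeValue_le_of_dfn_pos hd (G.mem_edgeSet.2 huv)
  linarith [σ.edgeValue_eq_zero d hunattacked]

/-- in every Nash equilibrium of `AD_{α,δ}(G)`, the union of the
attackers' supports is a vertex cover of the subgraph induced by the union of the
defenders' supports: every edge in the defenders' supports has an endpoint in the
attackers' supports. -/
theorem nash_attacker_supports_vertex_cover (G : SimpleGraph V)
    (hG : ∀ v : V, ∃ u, G.Adj u v) (α δ : ℕ) (hα : 1 ≤ α) (hδ : 1 ≤ δ)
    (σ : MixedProfile G α δ) (hσ : σ.IsNash) :
    ∀ e ∈ σ.dfnSupports, ∃ v ∈ σ.atkSupports, v ∈ e :=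
  nash_attacker_supports_vertex_cover_general G hG α δ hα σ hσ
end

section
/- In every Nash equilibrium σ of AD_{α,δ}(G), the total expected utility of the defenders satisfies Σ_{d∈[δ]} U_d(σ) = α · MinHit_σ. -/
open Finset
open scoped Classical

variable {V : Type*} [Fintype V] [DecidableEq V]

open MixedProfile

/-
At every pure profile the defenders' utilities add up to the number of caught attackers: an
attacker on a covered vertex `w` is split equally among the `|D_s(w)|` defenders covering `w`.
Taking expectations, the defenders' total is `α` minus the attackers' total. Since defenders
randomize independently, an attacker on `v` escapes with probability `1 - P(Hit(v))`; so no
attacker earns more than `1 - MinHit`, a pure attack on a least-hit vertex earns exactly that,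
and in equilibrium every attacker earns `1 - MinHit`.
-/

section ProductDistribution

variable {ι X : Type*} [Fintype ι] [DecidableEq ι] [Fintype X]

theorem sum_prod_eq_one (p : ι → X → ℝ) (hp : ∀ i, ∑ x, p i x = 1) :
    ∑ f : ι → X, ∏ i, p i (f i) = 1 := by
  rw [← Fintype.prod_sum, Finset.prod_eq_one fun i _ => hp i]

theorem sum_prod_mul_apply (p : ι → X → ℝ) (hp : ∀ i, ∑ x, p i x = 1) (a : ι)
    (h : X → ℝ) :
    ∑ f : ι → X, (∏ i, p i (f i)) * h (f a) = ∑ x, p a x * h x := by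
  have hsplit : ∀ f : ι → X, (∏ i, p i (f i)) * h (f a) =
      ∏ i, p i (f i) * if i = a then h (f i) else 1 := fun f => by
    rw [Finset.prod_mul_distrib, Fintype.prod_ite_eq']
  rw [Finset.sum_congr rfl fun f _ => hsplit f,
    ← Fintype.prod_sum fun i x => p i x * if i = a then h x else 1]
  rw [Fintype.prod_eq_single a fun i hi => by simp [hi, hp i]]
  simp

end ProductDistribution

namespace MixedProfile

variable {G : SimpleGraph V} {α δ : ℕ}

omit [Fintype V] in
theorem atkUtilPure_eq_prod (c : Config V α δ) (a : Fin α) :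
    atkUtilPure c a = ∏ j, if c.1 a ∈ c.2 j then (0 : ℝ) else 1 := by
  by_cases h : ∃ j, c.1 a ∈ c.2 j
  · obtain ⟨j, hj⟩ := h
    rw [atkUtilPure, if_pos ⟨j, hj⟩,
      Finset.prod_eq_zero (Finset.mem_univ j) (if_pos hj : _ = (0 : ℝ))]
  · push Not at h
    simp [atkUtilPure, h]

theorem sum_dfn_mul_ite_mem (σ : MixedProfile G α δ) (j : Fin δ) (v : V) :
    ∑ e, σ.dfn j e * (if v ∈ e then 0 else 1) = 1 - fracDeg (σ.dfn j) v := by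
  simp only [mul_ite, mul_zero, mul_one, fracDeg, Finset.sum_filter]
  rw [← σ.dfn_sum j, ← Finset.sum_sub_distrib]
  refine Finset.sum_congr rfl fun e _ => ?_
  split_ifs <;> ring

omit [DecidableEq V] in
theorem sum_configProb (σ : MixedProfile G α δ) :
    ∑ c : Config V α δ, σ.configProb c = 1 := by
  simp only [Fintype.sum_prod_type, configProb, ← Finset.mul_sum, sum_prod_eq_one _ σ.dfn_sum,
    mul_one, sum_prod_eq_one _ σ.atk_sum]

theorem expAtkUtil_eq_sum_one_sub_hitProb (σ : MixedProfile G α δ) (a : Fin α) :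
    σ.expAtkUtil a = ∑ v, σ.atk a v * (1 - σ.hitProb v) := by
  have escape : ∀ v : V, ∑ g : Fin δ → Sym2 V,
      (∏ j, σ.dfn j (g j)) * ∏ j, (if v ∈ g j then (0 : ℝ) else 1) = 1 - σ.hitProb v := by
    intro v
    simp_rw [← Finset.prod_mul_distrib]
    rw [← Fintype.prod_sum fun j e => σ.dfn j e * if v ∈ e then (0 : ℝ) else 1]
    simp_rw [sum_dfn_mul_ite_mem, hitProb, sub_sub_cancel]
  calc σ.expAtkUtil a
      = ∑ f : Fin α → V, (∏ i, σ.atk i (f i)) * ∑ g : Fin δ → Sym2 V,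
          (∏ j, σ.dfn j (g j)) * ∏ j, (if f a ∈ g j then (0 : ℝ) else 1) := by
        simp only [expAtkUtil, Fintype.sum_prod_type, configProb, atkUtilPure_eq_prod, mul_assoc,
          Finset.mul_sum]
    _ = ∑ f : Fin α → V, (∏ i, σ.atk i (f i)) * (1 - σ.hitProb (f a)) := by
        simp only [escape]
    _ = ∑ v, σ.atk a v * (1 - σ.hitProb v) :=
        sum_prod_mul_apply _ σ.atk_sum a fun v => 1 - σ.hitProb v

noncomputable def withPureAtk (σ : MixedProfile G α δ) (a : Fin α) (v : V) :
    MixedProfile G α δ :=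
  { σ with
    atk := Function.update σ.atk a (Pi.single v 1)
    atk_nonneg := fun i w => by
      rcases eq_or_ne i a with rfl | hi
      · by_cases hw : w = v <;> simp [hw]
      · simpa [hi] using σ.atk_nonneg i w
    atk_sum := fun i => by
      rcases eq_or_ne i a with rfl | hi
      · simp
      · simpa [hi] using σ.atk_sum i }

theorem expAtkUtil_withPureAtk (σ : MixedProfile G α δ) (a : Fin α) (v : V) :
    (σ.withPureAtk a v).expAtkUtil a = 1 - σ.hitProb v := by
  simp [expAtkUtil_eq_sum_one_sub_hitProb, withPureAtk, hitProb, Pi.single_apply]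

theorem expAtkUtil_le [Nonempty V] (σ : MixedProfile G α δ) (a : Fin α) :
    σ.expAtkUtil a ≤ 1 - σ.minHit := by
  calc σ.expAtkUtil a = ∑ v, σ.atk a v * (1 - σ.hitProb v) :=
        expAtkUtil_eq_sum_one_sub_hitProb σ a
    _ ≤ ∑ v, σ.atk a v * (1 - σ.minHit) := by
        gcongr with v
        · exact σ.atk_nonneg a v
        · exact Finset.inf'_le _ (Finset.mem_univ v)
    _ = 1 - σ.minHit := by rw [← Finset.sum_mul, σ.atk_sum a, one_mul]

theorem IsNash.expAtkUtil_eq [Nonempty V] {σ : MixedProfile G α δ} (hσ : σ.IsNash)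
    (a : Fin α) :
    σ.expAtkUtil a = 1 - σ.minHit := by
  obtain ⟨v, -, hv⟩ := Finset.exists_mem_eq_inf' Finset.univ_nonempty σ.hitProb
  refine le_antisymm (σ.expAtkUtil_le a) ?_
  have hdev := hσ.1 (σ.withPureAtk a v) a (fun i hi => by simp [withPureAtk, hi]) rfl
  rwa [expAtkUtil_withPureAtk, ← hv] at hdev

theorem sum_defUtilPure (c : Config V α δ) :
    ∑ d, defUtilPure c d = ∑ w, if dfnCount c w = 0 then 0 else (atkCount c w : ℝ) := by
  simp only [defUtilPure, Finset.sum_filter]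
  rw [Finset.sum_comm]
  refine Finset.sum_congr rfl fun w _ => ?_
  rw [← Finset.sum_filter, Finset.sum_const, nsmul_eq_mul]
  change (dfnCount c w : ℝ) * _ = _
  split_ifs with h
  · simp [h]
  · field_simp

theorem sum_one_sub_atkUtilPure (c : Config V α δ) :
    ∑ a, (1 - atkUtilPure c a) = ∑ w, if dfnCount c w = 0 then 0 else (atkCount c w : ℝ) := by
  have caught : ∀ a, 1 - atkUtilPure c a = if dfnCount c (c.1 a) = 0 then 0 else 1 := by
    intro a
    by_cases h : ∃ j, c.1 a ∈ c.2 j <;>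
      simp_all [atkUtilPure, dfnCount, Finset.card_eq_zero, Finset.filter_eq_empty_iff]
  rw [Finset.sum_congr rfl fun a _ => caught a,
    ← Finset.sum_fiberwise' Finset.univ c.1 fun w => if dfnCount c w = 0 then (0 : ℝ) else 1]
  refine Finset.sum_congr rfl fun w _ => ?_
  split_ifs <;> simp [atkCount]

theorem sum_expDefUtil (σ : MixedProfile G α δ) :
    ∑ d, σ.expDefUtil d = α - ∑ a, σ.expAtkUtil a := by
  calc ∑ d, σ.expDefUtil d = ∑ c, σ.configProb c * ∑ d, defUtilPure c d := by
        simp only [expDefUtil, Finset.mul_sum]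
        exact Finset.sum_comm
    _ = ∑ c, σ.configProb c * (α - ∑ a, atkUtilPure c a) := by
        simp only [sum_defUtilPure, ← sum_one_sub_atkUtilPure, Finset.sum_sub_distrib]
        simp
    _ = α - ∑ a, σ.expAtkUtil a := by
        simp only [mul_sub, Finset.sum_sub_distrib, ← Finset.sum_mul, sum_configProb, expAtkUtil,
          Finset.mul_sum]
        rw [Finset.sum_comm]
        ring

end MixedProfile

theorem nash_total_defender_utility_general (G : SimpleGraph V) [Nonempty V]
    (α δ : ℕ)
    (σ : MixedProfile G α δ) (hσ : σ.IsNash) :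
    ∑ d : Fin δ, σ.expDefUtil d = (α : ℝ) * σ.minHit := by
  rw [sum_expDefUtil, Finset.sum_congr rfl fun a _ => hσ.expAtkUtil_eq a]
  simp

/-- in every Nash equilibrium of `AD_{α,δ}(G)`, the total expected
utility of the defenders equals `α · MinHit_σ`. -/
theorem nash_total_defender_utility (G : SimpleGraph V) [Nonempty V]
    (hG : ∀ v : V, ∃ u, G.Adj u v) (α δ : ℕ) (hα : 1 ≤ α) (hδ : 1 ≤ δ)
    (σ : MixedProfile G α δ) (hσ : σ.IsNash) :
    ∑ d : Fin δ, σ.expDefUtil d = (α : ℝ) * σ.minHit :=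
  nash_total_defender_utility_general G α δ σ hσ
end
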